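/- The list vertex arboricity of every strictly m-degenerate finite simple graph is at most ⌈m/2⌉; that is, if G is strictly m-degenerate and L is a list assignment with |L(v)| ≥ ⌈m/2⌉ for every v ∈ V(G), then there is a coloring φ with φ(v) ∈ L(v) for every v ∈ V(G) such that every color class induces a forest in G. -/

import Mathlib

open SimpleGraph

universe u

/-- `H` is a cover of `G` with `κ` parts: every edge of `H` joins distinct fibres
`X_u`, `X_v` with `uv ∈ E(G)` (in particular each fibre is independent), and the
edges between two fibres form a (possibly empty) matching. -/
def IsCover {V : Type u} (κ : ℕ) (G : SimpleGraph V) (H : SimpleGraph (V × Fin κ)) : Prop :=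
  (∀ (u v : V) (p q : Fin κ), H.Adj (u, p) (v, q) → G.Adj u v) ∧
  (∀ (u v : V) (p q q' : Fin κ), H.Adj (u, p) (v, q) → H.Adj (u, p) (v, q') → q = q')

/-- The subgraph of `Γ` induced on `R` is strictly `f`-degenerate: every nonempty
subgraph with vertices inside `R` has a vertex whose degree there is `< f`. -/
def StrictlyFDegenerateOn {α : Type u} (Γ : SimpleGraph α) (f : α → ℕ) (R : Set α) : Prop :=
  ∀ S : Set α, S ⊆ R → S.Nonempty → ∃ x ∈ S, (S ∩ {y | Γ.Adj x y}).ncard < f x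

/-- `R` is a transversal of a cover with fibres `X_v = {v} × Fin κ`. -/
def IsTransversal {V : Type u} {κ : ℕ} (R : Set (V × Fin κ)) : Prop :=
  ∀ v : V, ∃! p : Fin κ, (v, p) ∈ R

/-- `H` has a strictly `f`-degenerate transversal. -/
def HasSFDTransversal {V : Type u} {κ : ℕ} (H : SimpleGraph (V × Fin κ))
    (f : V × Fin κ → ℕ) : Prop :=
  ∃ R : Set (V × Fin κ), IsTransversal R ∧ StrictlyFDegenerateOn H f R

/-! Colour the vertices greedily along a degeneracy order: when a vertex `x` is added it has
fewer than `m ≤ 2 |L x|` already coloured neighbours, so by pigeonhole some colour of `L x`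
occurs at most once among them. Giving `x` that colour keeps every colour class strictly
`2`-degenerate, and a strictly `2`-degenerate graph is a forest, because each vertex of a cycle
has two neighbours on it. -/

namespace StrictlyFDegenerateOn

variable {α : Type*} {Γ : SimpleGraph α} {f : α → ℕ} {R : Set α}

theorem mono {R' : Set α} (h : StrictlyFDegenerateOn Γ f R) (hR' : R' ⊆ R) :
    StrictlyFDegenerateOn Γ f R' :=
  fun S hS hne ↦ h S (hS.trans hR') hne

theorem insert [Finite α] {x : α} (h : StrictlyFDegenerateOn Γ f R)
    (hx : (R ∩ {y | Γ.Adj x y}).ncard < f x) : StrictlyFDegenerateOn Γ f (insert x R) := by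
  intro S hS hne
  by_cases hxS : x ∈ S
  · refine ⟨x, hxS, lt_of_le_of_lt (Set.ncard_le_ncard ?_) hx⟩
    rintro y ⟨hyS, hxy⟩
    exact ⟨(hS hyS).resolve_left (Γ.ne_of_adj hxy).symm, hxy⟩
  · exact h S (fun y hy ↦ (hS hy).resolve_left (ne_of_mem_of_not_mem hy hxS)) hne

theorem induce (h : StrictlyFDegenerateOn Γ f R) :
    StrictlyFDegenerateOn (Γ.induce R) (f ∘ Subtype.val) Set.univ := by
  intro S _ hne
  obtain ⟨_, ⟨x, hxS, rfl⟩, hx⟩ :=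
    h (Subtype.val '' S) (by rintro _ ⟨y, -, rfl⟩; exact y.2) (hne.image _)
  refine ⟨x, hxS, ?_⟩
  have himage : Subtype.val '' (S ∩ {y | (Γ.induce R).Adj x y}) =
      Subtype.val '' S ∩ {y | Γ.Adj x y} := by
    ext y
    constructor
    · rintro ⟨y, ⟨hyS, hxy⟩, rfl⟩
      exact ⟨⟨y, hyS, rfl⟩, hxy⟩
    · rintro ⟨⟨y, hyS, rfl⟩, hxy⟩
      exact ⟨y, ⟨hyS, hxy⟩, rfl⟩
  rwa [← himage, Set.ncard_image_of_injective _ Subtype.val_injective] at hx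

end StrictlyFDegenerateOn

theorem SimpleGraph.isAcyclic_of_strictlyFDegenerateOn_two {α : Type*} {H : SimpleGraph α}
    (h : StrictlyFDegenerateOn H (fun _ ↦ 2) Set.univ) : H.IsAcyclic := by
  intro a c hc
  obtain ⟨x, hx, hdeg⟩ :=
    h {w | w ∈ c.support} (Set.subset_univ _) ⟨a, c.start_mem_support⟩
  have hsub : c.toSubgraph.neighborSet x ⊆ {w | w ∈ c.support} ∩ {y | H.Adj x y} :=
    fun y hy ↦ ⟨c.verts_toSubgraph ▸ c.toSubgraph.neighborSet_subset_verts x hy,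
      c.toSubgraph.neighborSet_subset x hy⟩
  have hfin : ({w | w ∈ c.support} ∩ {y | H.Adj x y}).Finite :=
    (List.finite_toSet c.support).inter_of_left _
  have := Set.ncard_le_ncard hsub hfin
  rw [hc.ncard_neighborSet_toSubgraph_eq_two hx] at this
  exact this.not_gt hdeg

theorem Set.exists_mem_ncard_inter_preimage_le_one {α β : Type*} {N : Set α} (hN : N.Finite)
    (φ : α → β) {L : Finset β} (h : N.ncard < 2 * L.card) :
    ∃ c ∈ L, (N ∩ φ ⁻¹' {c}).ncard ≤ 1 := by
  classical
  obtain ⟨c, hc, hfiber⟩ := Finset.exists_card_fiber_lt_of_card_lt_mul (f := φ) (n := 2)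
    (by rwa [← Set.ncard_eq_toFinset_card N hN, mul_comm])
  refine ⟨c, hc, ?_⟩
  have : N ∩ φ ⁻¹' {c} = ↑{y ∈ hN.toFinset | φ y = c} := by ext; simp
  rw [this, Set.ncard_coe_finset]
  omega

theorem SimpleGraph.exists_coloring_strictlyFDegenerateOn_two {V : Type*} [Finite V]
    {G : SimpleGraph V} {f : V → ℕ} {R : Set V} (hG : StrictlyFDegenerateOn G f R)
    (L : V → Finset ℕ) (hL : ∀ v ∈ R, f v ≤ 2 * (L v).card) :
    ∃ φ : V → ℕ, (∀ v ∈ R, φ v ∈ L v) ∧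
      ∀ c, StrictlyFDegenerateOn G (fun _ ↦ 2) (R ∩ φ ⁻¹' {c}) := by
  rcases R.eq_empty_or_nonempty with rfl | hne
  · exact ⟨0, by simp, fun c S hS hSne ↦ by simp_all [Set.subset_empty_iff]⟩
  obtain ⟨x, hxR, hxdeg⟩ := hG R subset_rfl hne
  obtain ⟨φ, hφL, hφ⟩ := exists_coloring_strictlyFDegenerateOn_two (R := R \ {x})
    (hG.mono Set.sdiff_subset) L fun v hv ↦ hL v hv.1
  obtain ⟨c, hcL, hc⟩ := Set.exists_mem_ncard_inter_preimage_le_one (Set.toFinite _) φ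
    (hxdeg.trans_le (hL x hxR))
  classical
  refine ⟨Function.update φ x c, fun v hv ↦ ?_, fun d ↦ ?_⟩
  · rcases eq_or_ne v x with rfl | hvx
    · simpa using hcL
    · simpa [hvx] using hφL v ⟨hv, hvx⟩
  rcases eq_or_ne d c with rfl | hdc
  · refine ((hφ d).insert (x := x) ?_).mono fun v ⟨hvR, hv⟩ ↦ ?_
    · refine lt_of_le_of_lt (Set.ncard_le_ncard ?_) (Nat.lt_succ_of_le hc)
      rintro y ⟨⟨⟨hyR, -⟩, hy⟩, hxy⟩
      exact ⟨⟨hyR, hxy⟩, hy⟩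
    · rcases eq_or_ne v x with rfl | hvx
      · exact Set.mem_insert _ _
      · exact Or.inr ⟨⟨hvR, hvx⟩, by simpa [hvx] using hv⟩
  · refine (hφ d).mono fun v ⟨hvR, hv⟩ ↦ ?_
    have hvx : v ≠ x := by rintro rfl; simp [hdc.symm] at hv
    exact ⟨⟨hvR, hvx⟩, by simpa [hvx] using hv⟩
termination_by R.ncard
decreasing_by exact Set.ncard_sdiff_singleton_lt_of_mem hxR

/-- The list vertex arboricity of a strictly `m`-degenerate graph
is at most `⌈m/2⌉`: for every list assignment `L` with `|L v| ≥ ⌈m/2⌉`, there is a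
coloring `φ` with `φ v ∈ L v` whose every color class induces a forest. -/
theorem listVertexArboricity_of_strictlyDegenerate
    {V : Type} [Fintype V] (G : SimpleGraph V) (m : ℕ)
    (hG : StrictlyFDegenerateOn G (fun _ => m) Set.univ)
    (L : V → Finset ℕ) (hL : ∀ v : V, (m + 1) / 2 ≤ (L v).card) :
    ∃ φ : V → ℕ, (∀ v : V, φ v ∈ L v) ∧
      ∀ c : ℕ, (G.induce {v : V | φ v = c}).IsAcyclic := by
  obtain ⟨φ, hφL, hφ⟩ := exists_coloring_strictlyFDegenerateOn_two hG L fun v _ ↦ by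
    have := hL v
    omega
  refine ⟨φ, fun v ↦ hφL v (Set.mem_univ v), fun c ↦ ?_⟩
  have := (hφ c).induce
  rw [Set.univ_inter] at this
  exact isAcyclic_of_strictlyFDegenerateOn_two this
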